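/- Suppose the learned controller is linear in its parameters, û(x,θ) = Σ_{k=1}^K θ_k u_k(x), where u_1, …, u_K : ℝⁿ → ℝᵐ are continuous and their restrictions to W^c are linearly independent in C(W^c, ℝᵐ), and suppose there exists θ* ∈ Θ with û(x,θ*) = u_p*(x) for all x ∈ W^c. Then θ* is the unique minimizer of the expected control effort over the constraint-satisfying parameters: for every θ ∈ Ξ with θ ≠ θ*, ∫_{W^c} ‖û(x,θ)‖₂² dμ(x) > ∫_{W^c} ‖û(x,θ*)‖₂² dμ(x). -/

import Mathlib

open MeasureTheory
open scoped InnerProductSpace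

/-!
At every state `x ∈ W^c` the inputs satisfying the CLF constraint form a half-space, and `u_p*(x)`
is its element of least norm. A half-space is convex and the Euclidean norm is strictly convex, so
any other admissible input has strictly larger norm. Since `θ ∈ Ξ`, `û(·, θ)` is admissible
everywhere on `W^c`, so `‖û(·, θ*)‖² ≤ ‖û(·, θ)‖²` on `W^c`; linear independence of the `u_k` gives
a point of `W^c` where the two controllers differ, hence where the inequality is strict. By
continuity it stays strict on an open neighbourhood of that point, which has positive measure since
`W^c` is the support of `μ`.
-/

theorem Convex.norm_lt_norm_of_forall_norm_le {E : Type*} [NormedAddCommGroup E] [NormedSpace ℝ E]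
    [StrictConvexSpace ℝ E] {S : Set E} (hS : Convex ℝ S) {a b : E} (ha : a ∈ S)
    (hmin : ∀ v ∈ S, ‖a‖ ≤ ‖v‖) (hb : b ∈ S) (hne : a ≠ b) : ‖a‖ < ‖b‖ := by
  by_contra! hba
  have hmid : (1 / 2 : ℝ) • a + (1 / 2 : ℝ) • b ∈ S :=
    hS ha hb (by norm_num) (by norm_num) (by norm_num)
  have hlt : ‖(1 / 2 : ℝ) • a + (1 / 2 : ℝ) • b‖ < ‖a‖ :=
    norm_combo_lt_of_ne le_rfl hba hne (by norm_num) (by norm_num) (by norm_num)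
  exact (hmin _ hmid).not_gt hlt

theorem convex_setOf_inner_add_apply_le {E F : Type*} [NormedAddCommGroup E] [NormedSpace ℝ E]
    [NormedAddCommGroup F] [InnerProductSpace ℝ F] (g w : F) (A : E →L[ℝ] F) (r : ℝ) :
    Convex ℝ {v : E | ⟪g, w + A v⟫_ℝ ≤ r} := by
  have hset : {v : E | ⟪g, w + A v⟫_ℝ ≤ r} = {v : E | ⟪g, A v⟫_ℝ ≤ r - ⟪g, w⟫_ℝ} := by
    ext v
    simp only [Set.mem_ofPred_eq, inner_add_right, le_sub_iff_add_le']
  rw [hset]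
  exact convex_halfSpace_le ((innerSL ℝ g).comp A).isLinear _

theorem exists_sum_smul_ne_of_ne {ι X R M : Type*} [Fintype ι] [Ring R] [AddCommGroup M]
    [Module R M] {u : ι → X → M} {s : Set X}
    (hindep : ∀ θ : ι → R, (∀ x ∈ s, ∑ i, θ i • u i x = 0) → θ = 0) {θ θ' : ι → R}
    (hne : θ ≠ θ') : ∃ x ∈ s, ∑ i, θ i • u i x ≠ ∑ i, θ' i • u i x := by
  by_contra! heq
  refine hne (sub_eq_zero.mp (hindep (θ - θ') fun x hx => ?_))
  simp only [Pi.sub_apply, sub_smul, Finset.sum_sub_distrib, heq x hx, sub_self]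

theorem setIntegral_lt_setIntegral_of_continuous {X : Type*} [TopologicalSpace X] [T2Space X]
    [MeasurableSpace X] [OpensMeasurableSpace X] {μ : Measure X} [IsFiniteMeasure μ] {s : Set X}
    (hs : IsCompact s) (hsc : μ sᶜ = 0) {f g : X → ℝ} (hf : Continuous f) (hg : Continuous g)
    (hfg : ∀ x ∈ s, f x ≤ g x) {x₀ : X} (hx₀ : x₀ ∈ μ.support) (hlt : f x₀ < g x₀) :
    ∫ x in s, f x ∂μ < ∫ x in s, g x ∂μ := by
  have hint : IntegrableOn (g - f) s μ := (hg.sub hf).continuousOn.integrableOn_compact hs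
  have hnonneg : 0 ≤ᵐ[μ.restrict s] g - f :=
    ae_restrict_of_forall_mem hs.measurableSet fun x hx => sub_nonneg.mpr (hfg x hx)
  rw [← sub_pos, ← integral_sub (hg.continuousOn.integrableOn_compact hs)
    (hf.continuousOn.integrableOn_compact hs)]
  rw [← Pi.sub_def, setIntegral_pos_iff_support_of_nonneg_ae hnonneg hint, measure_inter_conull hsc]
  rw [Measure.support_eq_forall_isOpen] at hx₀
  exact hx₀ _ (sub_ne_zero.mpr hlt.ne') (hg.sub hf).isOpen_support

theorem min_effort_unique_general {n m K : ℕ}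
    (f_p : EuclideanSpace ℝ (Fin n) → EuclideanSpace ℝ (Fin n))
    (g_p : EuclideanSpace ℝ (Fin n) →
      (EuclideanSpace ℝ (Fin m) →L[ℝ] EuclideanSpace ℝ (Fin n)))
    (gradV : EuclideanSpace ℝ (Fin n) → EuclideanSpace ℝ (Fin n))
    (sig : EuclideanSpace ℝ (Fin n) → ℝ)
    (Wc : Set (EuclideanSpace ℝ (Fin n)))
    (hWcpt : IsCompact Wc)
    (μ : Measure (EuclideanSpace ℝ (Fin n))) [IsProbabilityMeasure μ]
    (hsupp : ∀ x : EuclideanSpace ℝ (Fin n),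
      x ∈ Wc ↔ ∀ U : Set (EuclideanSpace ℝ (Fin n)), IsOpen U → x ∈ U → 0 < μ U)
    (Θ : Set (EuclideanSpace ℝ (Fin K)))
    -- the learned controller is linear in its parameters
    (u : Fin K → EuclideanSpace ℝ (Fin n) → EuclideanSpace ℝ (Fin m))
    (hu : ∀ i, Continuous (u i))
    (hindep : ∀ θ : Fin K → ℝ, (∀ x ∈ Wc, ∑ i, θ i • u i x = 0) → θ = 0)
    (uhat : EuclideanSpace ℝ (Fin n) → EuclideanSpace ℝ (Fin K) →
      EuclideanSpace ℝ (Fin m))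
    (huhat : ∀ x θ, uhat x θ = ∑ i, θ i • u i x)
    (Δ : EuclideanSpace ℝ (Fin n) → EuclideanSpace ℝ (Fin K) → ℝ)
    (hΔ : ∀ x θ, Δ x θ = ⟪gradV x, f_p x + g_p x (uhat x θ)⟫_ℝ + sig x)
    (Ξ : Set (EuclideanSpace ℝ (Fin K)))
    (hΞ : Ξ = {θ ∈ Θ | ∀ x ∈ Wc, Δ x θ ≤ 0})
    -- the pointwise min-norm controller of the plant
    (upstar : EuclideanSpace ℝ (Fin n) → EuclideanSpace ℝ (Fin m))
    (hup_feas : ∀ x ∈ Wc, ⟪gradV x, f_p x + g_p x (upstar x)⟫_ℝ ≤ -sig x)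
    (hup_min : ∀ x ∈ Wc, ∀ v : EuclideanSpace ℝ (Fin m),
      ⟪gradV x, f_p x + g_p x v⟫_ℝ ≤ -sig x → ‖upstar x‖ ≤ ‖v‖)
    -- the min-norm controller is realizable by the learned controller
    (θstar : EuclideanSpace ℝ (Fin K))
    (hθstar_eq : ∀ x ∈ Wc, uhat x θstar = upstar x) :
    ∀ θ ∈ Ξ, θ ≠ θstar →
      (∫ x in Wc, ‖uhat x θstar‖ ^ 2 ∂μ) < ∫ x in Wc, ‖uhat x θ‖ ^ 2 ∂μ := by
  intro θ hθ hne
  have hcont (η : EuclideanSpace ℝ (Fin K)) : Continuous fun x => ‖uhat x η‖ ^ 2 := by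
    simp only [huhat]
    fun_prop
  have hadm (x : EuclideanSpace ℝ (Fin n)) (hx : x ∈ Wc) :
      ⟪gradV x, f_p x + g_p x (uhat x θ)⟫_ℝ ≤ -sig x := by
    rw [hΞ] at hθ
    linarith [hΔ x θ, hθ.2 x hx]
  have hle (x : EuclideanSpace ℝ (Fin n)) (hx : x ∈ Wc) : ‖uhat x θstar‖ ^ 2 ≤ ‖uhat x θ‖ ^ 2 := by
    rw [hθstar_eq x hx]
    gcongr
    exact hup_min x hx _ (hadm x hx)
  obtain ⟨x₀, hx₀, hne₀⟩ := exists_sum_smul_ne_of_ne hindep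
    (fun h => hne (WithLp.ofLp_injective 2 h))
  rw [← huhat, ← huhat] at hne₀
  have hlt : ‖uhat x₀ θstar‖ < ‖uhat x₀ θ‖ := by
    rw [hθstar_eq x₀ hx₀] at hne₀ ⊢
    exact (convex_setOf_inner_add_apply_le _ _ _ _).norm_lt_norm_of_forall_norm_le
      (hup_feas x₀ hx₀) (hup_min x₀ hx₀) (hadm x₀ hx₀) hne₀.symm
  have hWc_supp : Wc = μ.support := by
    ext x
    simp only [hsupp, Measure.support_eq_forall_isOpen, Set.mem_ofPred_eq]
    exact ⟨fun h U hx hU => h U hU hx, fun h U hU hx => h U hx hU⟩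
  refine setIntegral_lt_setIntegral_of_continuous hWcpt (hWc_supp ▸ Measure.measure_compl_support)
    (hcont θstar) (hcont θ) hle (hWc_supp ▸ hx₀) ?_
  gcongr

/-- Uniqueness step of Theorem 2 of the paper: with a linearly parameterized controller
whose basis is linearly independent on `C(W^c, ℝᵐ)`, if `θ*` realizes the pointwise
min-norm controller `u_p*` on `W^c`, then `θ*` is the unique minimizer of expected control
effort over the constraint-satisfying parameters `Ξ`. -/
theorem min_effort_unique {n m K : ℕ}
    (f_p : EuclideanSpace ℝ (Fin n) → EuclideanSpace ℝ (Fin n))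
    (g_p : EuclideanSpace ℝ (Fin n) →
      (EuclideanSpace ℝ (Fin m) →L[ℝ] EuclideanSpace ℝ (Fin n)))
    (V : EuclideanSpace ℝ (Fin n) → ℝ)
    (gradV : EuclideanSpace ℝ (Fin n) → EuclideanSpace ℝ (Fin n))
    (sig : EuclideanSpace ℝ (Fin n) → ℝ)
    (hfp : Continuous f_p) (hgp : Continuous g_p) (hsig : Continuous sig)
    (hV : ∀ x, HasGradientAt V (gradV x) x) (hgradV : Continuous gradV)
    (c : ℝ) (hc : 0 < c)
    (Wc : Set (EuclideanSpace ℝ (Fin n))) (hWc : Wc = {x | V x ≤ c})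
    (hWcpt : IsCompact Wc)
    (μ : Measure (EuclideanSpace ℝ (Fin n))) [IsProbabilityMeasure μ]
    (hsupp : ∀ x : EuclideanSpace ℝ (Fin n),
      x ∈ Wc ↔ ∀ U : Set (EuclideanSpace ℝ (Fin n)), IsOpen U → x ∈ U → 0 < μ U)
    (Θ : Set (EuclideanSpace ℝ (Fin K)))
    -- the learned controller is linear in its parameters
    (u : Fin K → EuclideanSpace ℝ (Fin n) → EuclideanSpace ℝ (Fin m))
    (hu : ∀ i, Continuous (u i))
    (hindep : ∀ θ : Fin K → ℝ, (∀ x ∈ Wc, ∑ i, θ i • u i x = 0) → θ = 0)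
    (uhat : EuclideanSpace ℝ (Fin n) → EuclideanSpace ℝ (Fin K) →
      EuclideanSpace ℝ (Fin m))
    (huhat : ∀ x θ, uhat x θ = ∑ i, θ i • u i x)
    (Δ : EuclideanSpace ℝ (Fin n) → EuclideanSpace ℝ (Fin K) → ℝ)
    (hΔ : ∀ x θ, Δ x θ = ⟪gradV x, f_p x + g_p x (uhat x θ)⟫_ℝ + sig x)
    (Ξ : Set (EuclideanSpace ℝ (Fin K)))
    (hΞ : Ξ = {θ ∈ Θ | ∀ x ∈ Wc, Δ x θ ≤ 0})
    -- the pointwise min-norm controller of the plant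
    (upstar : EuclideanSpace ℝ (Fin n) → EuclideanSpace ℝ (Fin m))
    (hup_cont : ContinuousOn upstar Wc)
    (hup_feas : ∀ x ∈ Wc, ⟪gradV x, f_p x + g_p x (upstar x)⟫_ℝ ≤ -sig x)
    (hup_min : ∀ x ∈ Wc, ∀ v : EuclideanSpace ℝ (Fin m),
      ⟪gradV x, f_p x + g_p x v⟫_ℝ ≤ -sig x → ‖upstar x‖ ≤ ‖v‖)
    -- the min-norm controller is realizable by the learned controller
    (θstar : EuclideanSpace ℝ (Fin K)) (hθstar : θstar ∈ Θ)
    (hθstar_eq : ∀ x ∈ Wc, uhat x θstar = upstar x) :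
    ∀ θ ∈ Ξ, θ ≠ θstar →
      (∫ x in Wc, ‖uhat x θstar‖ ^ 2 ∂μ) < ∫ x in Wc, ‖uhat x θ‖ ^ 2 ∂μ :=
  min_effort_unique_general f_p g_p gradV sig Wc hWcpt μ hsupp Θ u hu hindep uhat huhat Δ hΔ Ξ hΞ
    upstar hup_feas hup_min θstar hθstar_eq
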